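/- arXiv:2605.01695 — 2 statements merged into one kernel-verified Lean document; each statement's English description precedes it below -/
import Mathlib

section
/- Let δ ∈ (0,1), η > 0, m > 0, and suppose the phases θ_i satisfy |θ_i'(t)| ≤ W·e^{-t/m} + M·(1 − e^{-t/m}) for constants W, M ≥ 0. If m·W·(1 − e^{-η}) + M·m·(η − 1 + e^{-η}) < (1 − δ)·R(0), then R(t) > δ·R(0) for all t ∈ [0, ηm], where R(t) = (1/N)·Σ_j (1 + cos θ_j(t)). -/
/-!
Since `|d/dt (1 + cos θ_j)| ≤ |θ_j'|`, the order parameter moves no faster than the fastest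
oscillator, hence no faster than the speed bound `g(s) = W e^{-s/m} + M (1 - e^{-s/m})`.
Comparing `R` with the primitive `G(s) = (M - W) m e^{-s/m} + M s` of `g` gives
`|R t - R 0| ≤ G (η m) - G 0 = m W (1 - e^{-η}) + M m (η - 1 + e^{-η}) < (1 - δ) R 0`
on the initial layer.
-/

open Real Set Finset

noncomputable def orderParameter {ι : Type*} [Fintype ι] (θ : ι → ℝ → ℝ) (t : ℝ) : ℝ :=
  (1 / (Fintype.card ι : ℝ)) * ∑ j, (1 + cos (θ j t))

section OrderParameter

variable {ι : Type*} [Fintype ι] {θ : ι → ℝ → ℝ} {θ' : ι → ℝ} {t : ℝ}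

theorem hasDerivAt_orderParameter (hθ : ∀ i, HasDerivAt (θ i) (θ' i) t) :
    HasDerivAt (orderParameter θ)
      ((1 / (Fintype.card ι : ℝ)) * ∑ j, -sin (θ j t) * θ' j) t := by
  refine HasDerivAt.const_mul _ (HasDerivAt.fun_sum fun j _ => ?_)
  simpa using ((hasDerivAt_cos (θ j t)).comp t (hθ j)).const_add 1

theorem exists_hasDerivAt_orderParameter_abs_le {b : ℝ} (hθ : ∀ i, HasDerivAt (θ i) (θ' i) t)
    (hθ' : ∀ i, |θ' i| ≤ b) (hb : 0 ≤ b) :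
    ∃ r, HasDerivAt (orderParameter θ) r t ∧ |r| ≤ b := by
  refine ⟨_, hasDerivAt_orderParameter hθ, ?_⟩
  have hterm : ∀ j, |-sin (θ j t) * θ' j| ≤ b := fun j => by
    rw [abs_mul, abs_neg]
    exact (mul_le_of_le_one_left (abs_nonneg _) (abs_sin_le_one _)).trans (hθ' j)
  have hcard : (1 / (Fintype.card ι : ℝ)) * Fintype.card ι ≤ 1 := by
    rcases Nat.eq_zero_or_pos (Fintype.card ι) with h | h
    · simp [h]
    · rw [one_div_mul_cancel (by positivity)]
  calc |(1 / (Fintype.card ι : ℝ)) * ∑ j, -sin (θ j t) * θ' j|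
      ≤ (1 / (Fintype.card ι : ℝ)) * ∑ _j : ι, b := by
        rw [abs_mul, abs_of_nonneg (by positivity)]
        gcongr
        exact (abs_sum_le_sum_abs _ _).trans (sum_le_sum fun j _ => hterm j)
    _ = (1 / (Fintype.card ι : ℝ)) * Fintype.card ι * b := by
        rw [sum_const, card_univ, nsmul_eq_mul, mul_assoc]
    _ ≤ b := mul_le_of_le_one_left hb hcard

end OrderParameter

theorem abs_sub_le_sub_of_abs_deriv_le {f B B' : ℝ → ℝ} {a b : ℝ}
    (hf : ∀ x ∈ Icc a b, ∃ r, HasDerivAt f r x ∧ |r| ≤ B' x)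
    (hB : ∀ x ∈ Icc a b, HasDerivAt B (B' x) x) {x : ℝ} (hx : x ∈ Icc a b) :
    |f x - f a| ≤ B b - B a := by
  choose! f' hf' hbound using hf
  have hfx : |f x - f a| ≤ B x - B a :=
    image_norm_le_of_norm_deriv_right_le_deriv_boundary' (f := fun y => f y - f a)
      (B := fun y => B y - B a)
      (fun y hy => ((hf' y hy).continuousAt.sub continuousAt_const).continuousWithinAt)
      (fun y hy => ((hf' y (Ico_subset_Icc_self hy)).sub_const (f a)).hasDerivWithinAt)
      (by simp)
      (fun y hy => ((hB y hy).continuousAt.sub continuousAt_const).continuousWithinAt)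
      (fun y hy => ((hB y (Ico_subset_Icc_self hy)).sub_const (B a)).hasDerivWithinAt)
      (fun y hy => hbound y (Ico_subset_Icc_self hy)) hx
  have hBmono : MonotoneOn B (Icc a b) :=
    monotoneOn_of_hasDerivWithinAt_nonneg (convex_Icc a b)
      (fun y hy => (hB y hy).continuousAt.continuousWithinAt)
      (fun y hy => (hB y (interior_subset hy)).hasDerivWithinAt)
      (fun y hy => (abs_nonneg _).trans (hbound y (interior_subset hy)))
  linarith [hBmono hx (right_mem_Icc.2 (hx.1.trans hx.2)) hx.2]

theorem hasDerivAt_relaxation_primitive {m : ℝ} (hm : m ≠ 0) (W M s : ℝ) :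
    HasDerivAt (fun s => (M - W) * m * exp (-s / m) + M * s)
      (W * exp (-s / m) + M * (1 - exp (-s / m))) s := by
  have hexp : HasDerivAt (fun s : ℝ => exp (-s / m)) (exp (-s / m) * (-1 / m)) s :=
    (hasDerivAt_exp _).comp s ((hasDerivAt_id s).neg.div_const m)
  refine ((hexp.const_mul ((M - W) * m)).add ((hasDerivAt_id' s).const_mul M)).congr_deriv ?_
  field_simp
  ring

theorem stmt_17_general (N : ℕ) (δ η m W M : ℝ)
    (hm : 0 < m)
    (hW : 0 ≤ W) (hM : 0 ≤ M)
    (θ : Fin N → ℝ → ℝ) (hθ : ∀ i, ContDiff ℝ 1 (θ i))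
    (hbound : ∀ i t, 0 ≤ t →
      |deriv (θ i) t| ≤ W * Real.exp (-t / m) + M * (1 - Real.exp (-t / m)))
    (R : ℝ → ℝ) (hR : ∀ t, R t = (1 / (N : ℝ)) * ∑ j, (1 + Real.cos (θ j t)))
    (hsmall : m * W * (1 - Real.exp (-η)) + M * m * (η - 1 + Real.exp (-η))
      < (1 - δ) * R 0) :
    ∀ t ∈ Set.Icc (0 : ℝ) (η * m), R t > δ * R 0 := by
  intro t ht
  set G : ℝ → ℝ := fun s => (M - W) * m * exp (-s / m) + M * s
  have hR' : R = orderParameter θ := funext fun s => by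
    rw [hR, orderParameter, Fintype.card_fin]
  have hspeed_nonneg : ∀ s, 0 ≤ s → 0 ≤ W * exp (-s / m) + M * (1 - exp (-s / m)) := by
    intro s hs
    have : exp (-s / m) ≤ 1 := exp_le_one_iff.2 (div_nonpos_of_nonpos_of_nonneg (by linarith) hm.le)
    positivity
  have hRderiv : ∀ s ∈ Icc 0 (η * m), ∃ r, HasDerivAt R r s ∧
      |r| ≤ W * exp (-s / m) + M * (1 - exp (-s / m)) := fun s hs =>
    hR' ▸ exists_hasDerivAt_orderParameter_abs_le
      (fun i => ((hθ i).differentiable one_ne_zero s).hasDerivAt)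
      (fun i => hbound i s hs.1) (hspeed_nonneg s hs.1)
  have hlayer : G (η * m) - G 0 =
      m * W * (1 - exp (-η)) + M * m * (η - 1 + exp (-η)) := by
    simp only [G, neg_mul_eq_neg_mul, mul_div_cancel_right₀ _ hm.ne', neg_zero, zero_div, exp_zero]
    ring
  have hdev := abs_sub_le_sub_of_abs_deriv_le (B := G) hRderiv
    (fun s _ => hasDerivAt_relaxation_primitive hm.ne' W M s) ht
  linarith [neg_abs_le (R t - R 0)]

theorem stmt_17 (N : ℕ) (hN : 0 < N) (δ η m W M : ℝ)
    (hδ : δ ∈ Set.Ioo (0 : ℝ) 1) (hη : 0 < η) (hm : 0 < m)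
    (hW : 0 ≤ W) (hM : 0 ≤ M)
    (θ : Fin N → ℝ → ℝ) (hθ : ∀ i, ContDiff ℝ 1 (θ i))
    (hbound : ∀ i t, 0 ≤ t →
      |deriv (θ i) t| ≤ W * Real.exp (-t / m) + M * (1 - Real.exp (-t / m)))
    (R : ℝ → ℝ) (hR : ∀ t, R t = (1 / (N : ℝ)) * ∑ j, (1 + Real.cos (θ j t)))
    (hsmall : m * W * (1 - Real.exp (-η)) + M * m * (η - 1 + Real.exp (-η))
      < (1 - δ) * R 0) :
    ∀ t ∈ Set.Icc (0 : ℝ) (η * m), R t > δ * R 0 :=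
  stmt_17_general N δ η m W M hm hW hM θ hθ hbound R hR hsmall
end

section
/- Consider the vector field X on ℝ^N given by X_i(θ) = ν_i − κ·R(θ)·sin θ_i, where R(θ) = (1/N)Σ_j(1 + cos θ_j). Then div X(θ) = κ·( N·R(θ)·(1 − R(θ)) + (1/N)·Σ_i sin² θ_i ) ≥ κ·N·R(θ)·(1 − R(θ)). -/
/-!
Along the `i`-th coordinate only the `i`-th summand of `R` moves, so `∂R/∂θᵢ = -(1/N) sin θᵢ` and
the product rule gives `∂Xᵢ/∂θᵢ = κ ((1/N) sin² θᵢ - R cos θᵢ)`. Summing over `i` and using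
`∑ cos θᵢ = N R - N` yields the divergence formula; the sine-square term is nonnegative.
-/

open Real Finset

variable {ι : Type*} [Fintype ι]

noncomputable def winfreeOrderParam (θ : ι → ℝ) : ℝ :=
  (1 / (Fintype.card ι : ℝ)) * ∑ j, (1 + cos (θ j))

theorem hasDerivAt_sum_comp_update [DecidableEq ι] {f : ℝ → ℝ} {f' : ℝ}
    (θ : ι → ℝ) (i : ι) (hf : HasDerivAt f f' (θ i)) :
    HasDerivAt (fun x => ∑ j, f (Function.update θ i x j)) f' (θ i) := by
  have hsplit : (fun x => ∑ j, f (Function.update θ i x j))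
      = fun x => f x + ∑ j ∈ univ \ {i}, f (θ j) := by
    funext x
    simp only [Function.apply_update (fun _ => f), sum_update_of_mem (mem_univ i)]
  rw [hsplit]
  exact hf.add_const _

theorem hasDerivAt_winfreeOrderParam_update [DecidableEq ι] (θ : ι → ℝ) (i : ι) :
    HasDerivAt (fun x => winfreeOrderParam (Function.update θ i x))
      ((1 / (Fintype.card ι : ℝ)) * -sin (θ i)) (θ i) :=
  (hasDerivAt_sum_comp_update θ i ((hasDerivAt_cos (θ i)).const_add 1)).const_mul _

theorem deriv_winfreeField_update [DecidableEq ι] (ν κ : ℝ) (θ : ι → ℝ) (i : ι) :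
    deriv (fun x => ν - κ * winfreeOrderParam (Function.update θ i x) * sin x) (θ i)
      = κ * ((1 / (Fintype.card ι : ℝ)) * sin (θ i) ^ 2 - winfreeOrderParam θ * cos (θ i)) := by
  have h : HasDerivAt (fun x => ν - κ * winfreeOrderParam (Function.update θ i x) * sin x)
      _ (θ i) :=
    (((hasDerivAt_winfreeOrderParam_update θ i).const_mul κ).mul (hasDerivAt_sin (θ i))).const_sub ν
  rw [h.deriv, Function.update_eq_self]
  ring

theorem card_mul_winfreeOrderParam (θ : ι → ℝ) :
    (Fintype.card ι : ℝ) * winfreeOrderParam θ = ∑ j, (1 + cos (θ j)) := by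
  rcases isEmpty_or_nonempty ι with hι | hι
  · simp
  · have : (Fintype.card ι : ℝ) ≠ 0 := Nat.cast_ne_zero.mpr Fintype.card_ne_zero
    rw [winfreeOrderParam]
    field_simp

theorem sum_cos_eq_card_mul_winfreeOrderParam (θ : ι → ℝ) :
    ∑ j, cos (θ j) = (Fintype.card ι : ℝ) * winfreeOrderParam θ - Fintype.card ι := by
  rw [card_mul_winfreeOrderParam, sum_add_distrib]
  simp

theorem sum_deriv_winfreeField_update [DecidableEq ι] (ν : ι → ℝ) (κ : ℝ) (θ : ι → ℝ) :
    ∑ i, deriv (fun x => ν i - κ * winfreeOrderParam (Function.update θ i x) * sin x) (θ i)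
      = κ * ((Fintype.card ι : ℝ) * winfreeOrderParam θ * (1 - winfreeOrderParam θ)
          + (1 / (Fintype.card ι : ℝ)) * ∑ i, sin (θ i) ^ 2) := by
  simp only [deriv_winfreeField_update, ← mul_sum, sum_sub_distrib,
    sum_cos_eq_card_mul_winfreeOrderParam]
  ring

theorem stmt_18_general (N : ℕ) (ν : Fin N → ℝ) (κ : ℝ) (hκ : 0 ≤ κ)
    (R : (Fin N → ℝ) → ℝ)
    (hR : ∀ θ : Fin N → ℝ, R θ = (1 / (N : ℝ)) * ∑ j, (1 + Real.cos (θ j)))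
    (X : Fin N → (Fin N → ℝ) → ℝ)
    (hX : ∀ (i : Fin N) (θ : Fin N → ℝ), X i θ = ν i - κ * R θ * Real.sin (θ i))
    (θ : Fin N → ℝ) :
    (∑ i, deriv (fun x => X i (Function.update θ i x)) (θ i))
        = κ * ((N : ℝ) * R θ * (1 - R θ) + (1 / (N : ℝ)) * ∑ i, Real.sin (θ i) ^ 2) ∧
    (∑ i, deriv (fun x => X i (Function.update θ i x)) (θ i))
        ≥ κ * (N : ℝ) * R θ * (1 - R θ) := by
  obtain rfl : R = winfreeOrderParam := funext fun θ => by simp [hR, winfreeOrderParam]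
  have hdiv : (∑ i, deriv (fun x => X i (Function.update θ i x)) (θ i))
      = κ * ((N : ℝ) * winfreeOrderParam θ * (1 - winfreeOrderParam θ)
          + (1 / (N : ℝ)) * ∑ i, sin (θ i) ^ 2) := by
    simpa [hX] using sum_deriv_winfreeField_update ν κ θ
  refine ⟨hdiv, ?_⟩
  have hsin : 0 ≤ (1 / (N : ℝ)) * ∑ i, sin (θ i) ^ 2 := by positivity
  rw [hdiv]
  nlinarith [mul_nonneg hκ hsin]

theorem stmt_18 (N : ℕ) (hN : 0 < N) (ν : Fin N → ℝ) (κ : ℝ) (hκ : 0 ≤ κ)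
    (R : (Fin N → ℝ) → ℝ)
    (hR : ∀ θ : Fin N → ℝ, R θ = (1 / (N : ℝ)) * ∑ j, (1 + Real.cos (θ j)))
    (X : Fin N → (Fin N → ℝ) → ℝ)
    (hX : ∀ (i : Fin N) (θ : Fin N → ℝ), X i θ = ν i - κ * R θ * Real.sin (θ i))
    (θ : Fin N → ℝ) :
    (∑ i, deriv (fun x => X i (Function.update θ i x)) (θ i))
        = κ * ((N : ℝ) * R θ * (1 - R θ) + (1 / (N : ℝ)) * ∑ i, Real.sin (θ i) ^ 2) ∧
    (∑ i, deriv (fun x => X i (Function.update θ i x)) (θ i))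
        ≥ κ * (N : ℝ) * R θ * (1 - R θ) :=
  stmt_18_general N ν κ hκ R hR X hX θ
end
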